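/- arXiv:2110.01753 — 2 statements merged into one kernel-verified Lean document; each statement's English description precedes it below -/
import Mathlib

section
/- Let c, b ∈ k be nonzero and a ∈ k arbitrary. Then k[[X,Y,Z]]/(Z² + cX³Y + (aX+b)Y³) is isomorphic, as a k-algebra, to k[[X,Y,Z]]/(Z² + X³ + XY³). -/
/-!
Over a field of characteristic 2 pick `α² = a / c`, `β² = c α`, `μ³ = 1 / b`, `l³ = 1 / (c μ)`.
The invertible substitution `X ↦ α μ X + l Y`, `Y ↦ μ X`, `Z ↦ Z + β l μ X Y` sends
`Z² + c X³ Y + (a X + b) Y³` to exactly `Z² + X³ + X Y³`: squaring is additive, so `Z²` only adds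
`β² l² μ² X² Y²`, which cancels the `X² Y²`-term; `c α² = a` makes the `X⁴`- and `X³ Y`-terms
occur twice, so they vanish; `μ` and `l` normalise the coefficients of `X³` and `X Y³`. The
resulting automorphism of `k⟦X, Y, Z⟧` maps one generator to the other.
-/

open MvPowerSeries

noncomputable def Ideal.quotientSpanSingletonEquivAlg {R A B : Type*} [CommRing R] [CommRing A]
    [CommRing B] [Algebra R A] [Algebra R B] (e : A ≃ₐ[R] B) {f : A} {g : B} (h : e f = g) :
    (A ⧸ Ideal.span {f}) ≃ₐ[R] B ⧸ Ideal.span {g} :=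
  Ideal.quotientEquivAlg _ _ e (by simp [Ideal.map_span, h])

theorem normalForm_identity_of_two_eq_zero {A : Type*} [CommRing A] (h2 : (2 : A) = 0)
    {a b c α β μ l : A} (ha : c * α ^ 2 = a) (hβ : β ^ 2 = c * α) (hb : b * μ ^ 3 = 1) (hl : c * l ^ 3 * μ = 1)
    (x y z : A) :
    (z + β * l * μ * x * y) ^ 2 + c * ((α * μ * x + l * y) ^ 3 * (μ * x)) +
      (a * (α * μ * x + l * y) + b) * (μ * x) ^ 3 = z ^ 2 + x ^ 3 + x * y ^ 3 := by
  linear_combination (β * l * μ * x * y * z + 2 * c * α * l ^ 2 * μ ^ 2 * x ^ 2 * y ^ 2 +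
      α * a * μ ^ 4 * x ^ 4 + (a + c * α ^ 2) * l * μ ^ 3 * x ^ 3 * y) * h2 +
    l ^ 2 * μ ^ 2 * x ^ 2 * y ^ 2 * hβ + (α * μ ^ 4 * x ^ 4 + l * μ ^ 3 * x ^ 3 * y) * ha +
    x * y ^ 3 * hl + x ^ 3 * hb

namespace MvPowerSeries

section

variable {σ τ R : Type*} [CommRing R]

noncomputable def substAlgEquiv {a : σ → MvPowerSeries τ R} {b : τ → MvPowerSeries σ R}
    (ha : HasSubst a) (hb : HasSubst b) (hba : ∀ s, subst b (a s) = X s)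
    (hab : ∀ t, subst a (b t) = X t) : MvPowerSeries σ R ≃ₐ[R] MvPowerSeries τ R :=
  AlgEquiv.ofAlgHom (substAlgHom ha) (substAlgHom hb)
    (AlgHom.ext fun f => by simp [subst_comp_subst_apply hb ha, hab, subst_self])
    (AlgHom.ext fun f => by simp [subst_comp_subst_apply ha hb, hba, subst_self])

theorem substAlgEquiv_apply {a : σ → MvPowerSeries τ R} {b : τ → MvPowerSeries σ R}
    (ha : HasSubst a) (hb : HasSubst b) (hba : ∀ s, subst b (a s) = X s)
    (hab : ∀ t, subst a (b t) = X t) (f : MvPowerSeries σ R) :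
    substAlgEquiv ha hb hba hab f = subst a f := by
  simp [substAlgEquiv]

theorem C_inv_mul_C (u : Rˣ) : (C (↑u⁻¹ : R) : MvPowerSeries σ R) * C (u : R) = 1 := by
  rw [← map_mul, Units.inv_mul, map_one]

end

variable {R : Type*} [CommRing R]

noncomputable def coordChange (α β : R) (μ l : Rˣ) : Fin 3 → MvPowerSeries (Fin 3) R :=
  ![C α * C (μ : R) * X 0 + C (l : R) * X 1, C (μ : R) * X 0,
    X 2 + C β * C (l : R) * C (μ : R) * X 0 * X 1]

noncomputable def coordChangeInv (α β : R) (μ l : Rˣ) : Fin 3 → MvPowerSeries (Fin 3) R :=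
  ![C (↑μ⁻¹ : R) * X 1, C (↑l⁻¹ : R) * X 0 - C α * C (↑l⁻¹ : R) * X 1,
    X 2 - C β * X 0 * X 1 + C α * C β * X 1 ^ 2]

theorem hasSubst_coordChange (α β : R) (μ l : Rˣ) : HasSubst (coordChange α β μ l) :=
  hasSubst_of_constantCoeff_zero fun i => by fin_cases i <;> simp [coordChange]

theorem hasSubst_coordChangeInv (α β : R) (μ l : Rˣ) : HasSubst (coordChangeInv α β μ l) :=
  hasSubst_of_constantCoeff_zero fun i => by fin_cases i <;> simp [coordChangeInv]

theorem subst_coordChangeInv_coordChange (α β : R) (μ l : Rˣ) (i : Fin 3) :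
    subst (coordChangeInv α β μ l) (coordChange α β μ l i) = X i := by
  have h := hasSubst_coordChangeInv α β μ l
  simp only [coordChangeInv] at h ⊢
  fin_cases i <;> simp only [coordChange, Fin.zero_eta, Fin.mk_one, Fin.reduceFinMk,
    Matrix.cons_val, subst_add h, subst_mul h, subst_X h, subst_C]
  · linear_combination C α * X 1 * C_inv_mul_C μ + (X 0 - C α * X 1) * C_inv_mul_C l
  · linear_combination X 1 * C_inv_mul_C μ
  · linear_combination (C β * X 0 * X 1 - C α * C β * X 1 ^ 2) *
      (C (↑μ⁻¹ : R) * C ↑μ * C_inv_mul_C l + C_inv_mul_C μ)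

theorem subst_coordChange_coordChangeInv (α β : R) (μ l : Rˣ) (i : Fin 3) :
    subst (coordChange α β μ l) (coordChangeInv α β μ l i) = X i := by
  have h := hasSubst_coordChange α β μ l
  simp only [coordChange] at h ⊢
  fin_cases i <;> simp only [coordChangeInv, Fin.zero_eta, Fin.mk_one, Fin.reduceFinMk,
    Matrix.cons_val, subst_add h, subst_sub h, subst_mul h, subst_pow h, subst_X h, subst_C]
  · linear_combination X 0 * C_inv_mul_C μ
  · linear_combination X 1 * C_inv_mul_C l
  · ring

noncomputable def coordChangeAlgEquiv (α β : R) (μ l : Rˣ) :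
    MvPowerSeries (Fin 3) R ≃ₐ[R] MvPowerSeries (Fin 3) R :=
  substAlgEquiv (hasSubst_coordChange α β μ l) (hasSubst_coordChangeInv α β μ l)
    (subst_coordChangeInv_coordChange α β μ l) (subst_coordChange_coordChangeInv α β μ l)

theorem coordChangeAlgEquiv_eq_of_charTwo [CharP R 2] {a b c α β : R} {μ l : Rˣ}
    (ha : c * α ^ 2 = a) (hβ : β ^ 2 = c * α) (hb : b * μ ^ 3 = 1) (hl : c * l ^ 3 * μ = 1) :
    coordChangeAlgEquiv α β μ l (X 2 ^ 2 + C c * (X 0 ^ 3 * X 1) + (C a * X 0 + C b) * X 1 ^ 3) =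
      X 2 ^ 2 + X 0 ^ 3 + X 0 * X 1 ^ 3 := by
  have h := hasSubst_coordChange α β μ l
  rw [coordChangeAlgEquiv, substAlgEquiv_apply]
  simp only [coordChange] at h ⊢
  simp only [subst_add h, subst_mul h, subst_pow h, subst_X h, subst_C, Fin.isValue,
    Matrix.cons_val]
  refine normalForm_identity_of_two_eq_zero ?_ ?_ ?_ ?_ ?_ _ _ _
  · rw [← map_ofNat C 2, CharTwo.two_eq_zero, map_zero]
  · rw [← map_pow, ← map_mul, ha]
  · rw [← map_pow, ← map_mul, hβ]
  · rw [← map_pow, ← map_mul, hb, map_one]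
  · rw [← map_pow, ← map_mul, ← map_mul, hl, map_one]

end MvPowerSeries

/-- For c, b ≠ 0 and arbitrary a,
k[[X,Y,Z]]/(Z² + cX³Y + (aX+b)Y³) ≅ k[[X,Y,Z]]/(Z² + X³ + XY³). -/
theorem stmt_16 (k : Type*) [Field k] [IsAlgClosed k] [CharP k 2] (c b a : k)
    (hc : c ≠ 0) (hb : b ≠ 0) :
    Nonempty
      ((MvPowerSeries (Fin 3) k ⧸
          Ideal.span {(X 2 : MvPowerSeries (Fin 3) k) ^ 2 +
            MvPowerSeries.C (σ := Fin 3) (R := k) c * (X 0 ^ 3 * X 1) +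
            (MvPowerSeries.C (σ := Fin 3) (R := k) a * X 0 + MvPowerSeries.C (σ := Fin 3) (R := k) b) * X 1 ^ 3}) ≃ₐ[k]
        (MvPowerSeries (Fin 3) k ⧸
          Ideal.span {(X 2 : MvPowerSeries (Fin 3) k) ^ 2 + X 0 ^ 3 + X 0 * X 1 ^ 3})) := by
  obtain ⟨α, hα⟩ := IsAlgClosed.exists_pow_nat_eq (a / c) two_pos
  obtain ⟨β, hβ⟩ := IsAlgClosed.exists_pow_nat_eq (c * α) two_pos
  obtain ⟨μ, hμ⟩ := IsAlgClosed.exists_pow_nat_eq b⁻¹ three_pos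
  have hμ0 : μ ≠ 0 := ne_zero_pow three_ne_zero (hμ ▸ inv_ne_zero hb)
  obtain ⟨l, hl⟩ := IsAlgClosed.exists_pow_nat_eq (c * μ)⁻¹ three_pos
  have hl0 : l ≠ 0 := ne_zero_pow three_ne_zero (hl ▸ inv_ne_zero (mul_ne_zero hc hμ0))
  refine ⟨Ideal.quotientSpanSingletonEquivAlg
    (coordChangeAlgEquiv α β (Units.mk0 μ hμ0) (Units.mk0 l hl0)) ?_⟩
  refine coordChangeAlgEquiv_eq_of_charTwo (by rw [hα]; field_simp) hβ ?_ ?_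
  · simp [hμ, hb]
  · simp only [Units.val_mk0, hl]
    field_simp
end

section
/- Let a ∈ k be nonzero and let δ be the k-derivation (x³ + ay²)·∂/∂x + x²y·∂/∂y of k[x,y]. Then the kernel of δ equals the k-subalgebra of k[x,y] generated by x², y² and x³y + ay³. -/
/-!
In characteristic 2 every derivation kills squares, and since `k` is perfect, `k[x, y]` is free
over its subring of squares on `1, x, y, xy`. Writing `f = s₀² + s₁² x + s₂² y + s₃² xy` and
`a = b²`, one finds `δ f = (b s₁ y)² + (s₁ x)² x + (s₂ x + b s₃ y)² y`, so `δ f = 0` forces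
`s₁ = 0` and `s₂ x = b s₃ y`. Hence `s₃ = x u`, `s₂ = b u y`, and `f = s₀² + u² (x³ y + a y³)`.
-/

open MvPolynomial

theorem Derivation.map_sq_eq_zero_of_charTwo {R A M : Type*} [CommSemiring R] [CommSemiring A]
    [Algebra R A] [AddCommMonoid M] [Module A M] [Module R M] [IsScalarTower R A M] [CharP A 2]
    (D : Derivation R A M) (a : A) : D (a ^ 2) = 0 := by
  rw [D.leibniz_pow, ← Nat.cast_smul_eq_nsmul A, CharP.cast_eq_zero, zero_smul]

theorem MvPolynomial.sq_mem_adjoin_range_X_sq {σ R : Type*} [CommSemiring R] [CharP R 2]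
    (p : MvPolynomial σ R) :
    p ^ 2 ∈ Algebra.adjoin R (Set.range fun i => (X i ^ 2 : MvPolynomial σ R)) := by
  induction p using MvPolynomial.induction_on with
  | C r => exact (map_pow C r 2).symm ▸ Subalgebra.algebraMap_mem _ (r ^ 2)
  | add p q hp hq => exact CharTwo.add_sq p q ▸ add_mem hp hq
  | mul_X p i hp =>
    exact (mul_pow p (X i) 2).symm ▸ mul_mem hp (Algebra.subset_adjoin ⟨i, rfl⟩)

section SqExpansion

variable {R : Type*} [CommRing R]

/-- For a perfect domain `R` of characteristic 2, `R[x, y]` is free on `1, x, y, xy` over its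
subring of squares. -/
noncomputable def sqExpansion (s₀ s₁ s₂ s₃ : MvPolynomial (Fin 2) R) : MvPolynomial (Fin 2) R :=
  s₀ ^ 2 + s₁ ^ 2 * X 0 + s₂ ^ 2 * X 1 + s₃ ^ 2 * (X 0 * X 1)

@[simp]
theorem sqExpansion_zero_zero_zero (s : MvPolynomial (Fin 2) R) :
    sqExpansion s 0 0 0 = s ^ 2 := by
  simp [sqExpansion]

variable [CharP R 2]

theorem exists_eq_sqExpansion [PerfectRing R 2] (f : MvPolynomial (Fin 2) R) :
    ∃ s₀ s₁ s₂ s₃, f = sqExpansion s₀ s₁ s₂ s₃ := by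
  unfold sqExpansion
  induction f using MvPolynomial.induction_on with
  | C r =>
    obtain ⟨b, rfl⟩ := surjective_frobenius R 2 r
    exact ⟨C b, 0, 0, 0, by simp [frobenius_def]⟩
  | add p q hp hq =>
    obtain ⟨p₀, p₁, p₂, p₃, rfl⟩ := hp
    obtain ⟨q₀, q₁, q₂, q₃, rfl⟩ := hq
    refine ⟨p₀ + q₀, p₁ + q₁, p₂ + q₂, p₃ + q₃, ?_⟩
    simp only [CharTwo.add_sq]
    ring
  | mul_X p i hp =>
    obtain ⟨p₀, p₁, p₂, p₃, rfl⟩ := hp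
    match i with
    | 0 => exact ⟨p₁ * X 0, p₀, p₃ * X 0, p₂, by ring⟩
    | 1 => exact ⟨p₂ * X 1, p₃ * X 1, p₀, p₁, by ring⟩

theorem Derivation.map_sqExpansion {M : Type*} [AddCommGroup M]
    [Module (MvPolynomial (Fin 2) R) M] [Module R M] [IsScalarTower R (MvPolynomial (Fin 2) R) M]
    (D : Derivation R (MvPolynomial (Fin 2) R) M) (s₀ s₁ s₂ s₃ : MvPolynomial (Fin 2) R) :
    D (sqExpansion s₀ s₁ s₂ s₃) =
      s₁ ^ 2 • D (X 0) + s₂ ^ 2 • D (X 1) + (s₃ ^ 2 * X 0) • D (X 1) + (s₃ ^ 2 * X 1) • D (X 0) := by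
  simp only [sqExpansion, map_add, Derivation.leibniz, D.map_sq_eq_zero_of_charTwo, smul_zero,
    add_zero, zero_add, smul_add, mul_smul, add_assoc]

theorem pderiv_zero_sqExpansion (s₀ s₁ s₂ s₃ : MvPolynomial (Fin 2) R) :
    pderiv 0 (sqExpansion s₀ s₁ s₂ s₃) = sqExpansion s₁ 0 s₃ 0 := by
  rw [Derivation.map_sqExpansion]
  simp [sqExpansion, pderiv_X]

theorem pderiv_one_sqExpansion (s₀ s₁ s₂ s₃ : MvPolynomial (Fin 2) R) :
    pderiv 1 (sqExpansion s₀ s₁ s₂ s₃) = sqExpansion s₂ s₃ 0 0 := by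
  rw [Derivation.map_sqExpansion]
  simp [sqExpansion, pderiv_X]

theorem eq_zero_of_sqExpansion_eq_zero [IsDomain R] {s₀ s₁ s₂ s₃ : MvPolynomial (Fin 2) R}
    (h : sqExpansion s₀ s₁ s₂ s₃ = 0) : s₀ = 0 ∧ s₁ = 0 ∧ s₂ = 0 ∧ s₃ = 0 := by
  have h₁ : sqExpansion s₁ 0 s₃ 0 = 0 := by rw [← pderiv_zero_sqExpansion, h, map_zero]
  have h₂ : sqExpansion s₂ s₃ 0 0 = 0 := by rw [← pderiv_one_sqExpansion, h, map_zero]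
  have h₃ : s₃ = 0 := by
    simpa [pderiv_one_sqExpansion] using congrArg (pderiv 1) h₁
  subst h₃
  simp_all [sqExpansion]

end SqExpansion

section CubicDerivation

variable {k : Type*} [Field k] [CharP k 2] {a : k}
  {δ : Derivation k (MvPolynomial (Fin 2) k) (MvPolynomial (Fin 2) k)}

theorem map_sqExpansion_of_sq_eq {b : k} (hb : b ^ 2 = a) (hx : δ (X 0) = X 0 ^ 3 + C a * X 1 ^ 2)
    (hy : δ (X 1) = X 0 ^ 2 * X 1) (s₀ s₁ s₂ s₃ : MvPolynomial (Fin 2) k) :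
    δ (sqExpansion s₀ s₁ s₂ s₃) =
      sqExpansion (C b * s₁ * X 1) (s₁ * X 0) (s₂ * X 0 + C b * s₃ * X 1) 0 := by
  subst hb
  rw [δ.map_sqExpansion, hx, hy]
  simp only [sqExpansion, smul_eq_mul, map_pow]
  linear_combination (s₃ ^ 2 * X 0 ^ 3 * X 1 - C b * s₂ * s₃ * X 0 * X 1 ^ 2) *
    (CharTwo.two_eq_zero : (2 : MvPolynomial (Fin 2) k) = 0)

theorem exists_eq_sq_add_sq_mul_of_map_eq_zero [PerfectRing k 2] (ha : a ≠ 0)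
    (hx : δ (X 0) = X 0 ^ 3 + C a * X 1 ^ 2) (hy : δ (X 1) = X 0 ^ 2 * X 1)
    {f : MvPolynomial (Fin 2) k} (hf : δ f = 0) :
    ∃ s u, f = s ^ 2 + u ^ 2 * (X 0 ^ 3 * X 1 + C a * X 1 ^ 3) := by
  obtain ⟨b, hb⟩ := surjective_frobenius k 2 a
  rw [frobenius_def] at hb
  have hb₀ : b ≠ 0 := by rintro rfl; exact ha (by simpa using hb.symm)
  obtain ⟨s₀, s₁, s₂, s₃, rfl⟩ := exists_eq_sqExpansion f
  rw [map_sqExpansion_of_sq_eq hb hx hy] at hf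
  obtain ⟨-, h₁, h₂, -⟩ := eq_zero_of_sqExpansion_eq_zero hf
  have hs₁ : s₁ = 0 := (mul_eq_zero.1 h₁).resolve_right (X_ne_zero 0)
  rw [CharTwo.add_eq_zero] at h₂
  obtain ⟨u, rfl⟩ : X 0 ∣ s₃ := by
    have : X 0 ∣ C b * s₃ * X 1 := h₂ ▸ dvd_mul_left _ _
    refine (hb₀.isUnit.map C).dvd_mul_left.1 ((X_prime.dvd_or_dvd this).resolve_right ?_)
    simp
  have hs₂ : s₂ = C b * u * X 1 := mul_right_cancel₀ (X_ne_zero 0) (by linear_combination h₂)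
  refine ⟨s₀, u, ?_⟩
  simp only [sqExpansion, hs₁, hs₂, ← hb, map_pow]
  ring

theorem map_eq_zero_of_mem_adjoin (hx : δ (X 0) = X 0 ^ 3 + C a * X 1 ^ 2)
    (hy : δ (X 1) = X 0 ^ 2 * X 1) {f : MvPolynomial (Fin 2) k}
    (hf : f ∈ Algebra.adjoin k {X 0 ^ 2, X 1 ^ 2, X 0 ^ 3 * X 1 + C a * X 1 ^ 3}) : δ f = 0 := by
  refine Derivation.eqOn_adjoin (D2 := 0) ?_ hf
  rintro g (rfl | rfl | rfl)
  · exact δ.map_sq_eq_zero_of_charTwo _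
  · exact δ.map_sq_eq_zero_of_charTwo _
  · show δ _ = 0
    simp only [map_add, Derivation.leibniz, Derivation.leibniz_pow, hx, hy, derivation_C,
      smul_eq_mul, nsmul_eq_mul]
    linear_combination (2 * X 0 ^ 5 * X 1 + 3 * C a * X 0 ^ 2 * X 1 ^ 3) *
      (CharTwo.two_eq_zero : (2 : MvPolynomial (Fin 2) k) = 0)

end CubicDerivation

/-- For a ≠ 0 and δ = (x³ + ay²)·∂/∂x + x²y·∂/∂y, the kernel of δ equals
the k-subalgebra generated by x², y², x³y + ay³. -/
theorem stmt_17 (k : Type*) [Field k] [IsAlgClosed k] [CharP k 2] (a : k) (ha : a ≠ 0)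
    (δ : Derivation k (MvPolynomial (Fin 2) k) (MvPolynomial (Fin 2) k))
    (hδ : δ = mkDerivation k
      ![(X 0 : MvPolynomial (Fin 2) k) ^ 3 + C a * X 1 ^ 2, X 0 ^ 2 * X 1]) :
    {f : MvPolynomial (Fin 2) k | δ f = 0} =
      ↑(Algebra.adjoin k ({X 0 ^ 2, X 1 ^ 2, X 0 ^ 3 * X 1 + C a * X 1 ^ 3} :
          Set (MvPolynomial (Fin 2) k))) := by
  have hx : δ (X 0) = X 0 ^ 3 + C a * X 1 ^ 2 := by simp [hδ, mkDerivation_X]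
  have hy : δ (X 1) = X 0 ^ 2 * X 1 := by simp [hδ, mkDerivation_X]
  have sq_mem (s : MvPolynomial (Fin 2) k) :
      s ^ 2 ∈ Algebra.adjoin k {X 0 ^ 2, X 1 ^ 2, X 0 ^ 3 * X 1 + C a * X 1 ^ 3} := by
    refine Algebra.adjoin_mono ?_ (sq_mem_adjoin_range_X_sq s)
    rintro _ ⟨i, rfl⟩
    fin_cases i <;> simp
  ext f
  refine ⟨fun hf => ?_, map_eq_zero_of_mem_adjoin hx hy⟩
  obtain ⟨s, u, rfl⟩ := exists_eq_sq_add_sq_mul_of_map_eq_zero ha hx hy hf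
  exact add_mem (sq_mem s) (mul_mem (sq_mem u) (Algebra.subset_adjoin (by simp)))
end
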